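/- arXiv:2105.04803 — 3 statements merged into one kernel-verified Lean document; each statement's English description precedes it below -/
import Mathlib

section
/- Define e(g) = Σ_{i=0}^{s} t_i·2^{t_i−1} + Σ_{i=0}^{s} i·2^{t_i}, where g = Σ_{i=0}^{s} 2^{t_i} with t_0 > t_1 > ... > t_s ≥ 0 the binary expansion of g. Then for all positive integers g_0 ≤ g_1, e(g_0 + g_1) ≥ e(g_0) + e(g_1) + g_0. -/
/-- The strictly decreasing list of exponents `t_0 > t_1 > ⋯ > t_s` in the
binary expansion `g = Σ_{i=0}^{s} 2^(t_i)` of `g`. -/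
def expList (g : ℕ) : List ℕ :=
  (((Finset.range (g + 1)).filter (fun k => g.testBit k)).sort (· ≤ ·)).reverse

/-- `e g = Σ_{i=0}^{s} t_i·2^(t_i−1) + Σ_{i=0}^{s} i·2^(t_i)` over the binary
expansion `g = Σ_{i=0}^{s} 2^(t_i)` with `t_0 > t_1 > ⋯ > t_s ≥ 0` (and `e 0 = 0`). -/
def eHL (g : ℕ) : ℕ :=
  ((expList g).zipIdx.map (fun p => p.1 * 2 ^ (p.1 - 1) + p.2 * 2 ^ p.1)).sum

/-! Splitting by the last binary digit gives the recursions `e(2m) = 2 e(m) + m` and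
`e(2m+1) = e(m) + e(m+1) + m`. In the symmetric form `e(a) + e(b) + min a b ≤ e(a+b)` the
inequality then follows by strong induction on `a + b`: write `a` and `b` as `2x` or `2x+1`
and add up the induction hypotheses for pairs of halves summing to `⌊(a+b)/2⌋` and
`⌈(a+b)/2⌉`, whose `min` terms add up to at least `min a b`. -/

theorem filter_testBit_range_eq_toFinset_bitIndices (g : ℕ) :
    (Finset.range (g + 1)).filter (fun k => g.testBit k) = g.bitIndices.toFinset := by
  ext k
  simp only [Finset.mem_filter, Finset.mem_range, List.mem_toFinset, Nat.mem_bitIndices,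
    and_iff_right_iff_imp]
  intro hk
  have := Nat.two_pow_le_of_mem_bitIndices (Nat.mem_bitIndices.2 hk)
  have := Nat.lt_two_pow_self (n := k)
  omega

theorem expList_eq_reverse_bitIndices (g : ℕ) : expList g = g.bitIndices.reverse := by
  rw [expList, filter_testBit_range_eq_toFinset_bitIndices,
    (List.toFinset_sort _ Nat.bitIndices_nodup).2 Nat.bitIndices_sorted.sortedLE.pairwise]

def eHLTerm (p : ℕ × ℕ) : ℕ := p.1 * 2 ^ (p.1 - 1) + p.2 * 2 ^ p.1

theorem eHL_eq_sum_eHLTerm (g : ℕ) :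
    eHL g = (g.bitIndices.reverse.zipIdx.map eHLTerm).sum := by
  rw [eHL, expList_eq_reverse_bitIndices]
  rfl

theorem eHLTerm_succ_fst (t i : ℕ) : eHLTerm (t + 1, i) = 2 * eHLTerm (t, i) + 2 ^ t := by
  cases t <;> simp only [eHLTerm, Nat.add_sub_cancel] <;> ring

theorem sum_zipIdx_map_succ_eHLTerm (l : List ℕ) :
    ((l.map (· + 1)).zipIdx.map eHLTerm).sum =
      2 * (l.zipIdx.map eHLTerm).sum + (l.map (2 ^ ·)).sum := by
  have hfst : (l.zipIdx.map fun p => 2 ^ p.1) = l.map (2 ^ ·) := by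
    conv_rhs => rw [← List.zipIdx_map_fst 0 l, List.map_map]
    rfl
  rw [List.zipIdx_map, List.map_map, ← List.sum_map_mul_left, ← hfst, ← List.sum_map_add]
  congr 1
  exact List.map_congr_left fun ⟨t, i⟩ _ => eHLTerm_succ_fst t i

theorem eHL_two_mul (m : ℕ) : eHL (2 * m) = 2 * eHL m + m := by
  rw [eHL_eq_sum_eHLTerm, eHL_eq_sum_eHLTerm, Nat.bitIndices_two_mul, ← List.map_reverse,
    sum_zipIdx_map_succ_eHLTerm, List.map_reverse, List.sum_reverse,
    Nat.sum_map_two_pow_bitIndices]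

theorem eHL_two_mul_add_one_eq_add_length (m : ℕ) :
    eHL (2 * m + 1) = 2 * eHL m + m + m.bitIndices.length := by
  rw [eHL_eq_sum_eHLTerm, eHL_eq_sum_eHLTerm, Nat.bitIndices_two_mul_add_one, List.reverse_cons,
    ← List.map_reverse, List.zipIdx_append, List.map_append, List.sum_append,
    sum_zipIdx_map_succ_eHLTerm, List.map_reverse, List.sum_reverse,
    Nat.sum_map_two_pow_bitIndices]
  simp [eHLTerm]

theorem eHL_succ (n : ℕ) : eHL (n + 1) = eHL n + n.bitIndices.length := by
  induction n using Nat.strong_induction_on with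
  | _ n ih =>
    obtain ⟨m, rfl | rfl⟩ := Nat.even_or_odd' n
    · rw [eHL_two_mul_add_one_eq_add_length, eHL_two_mul, Nat.bitIndices_two_mul, List.length_map]
    · rw [show 2 * m + 1 + 1 = 2 * (m + 1) by ring, eHL_two_mul, ih m (by omega),
        eHL_two_mul_add_one_eq_add_length, Nat.bitIndices_two_mul_add_one, List.length_cons,
        List.length_map]
      ring

theorem eHL_two_mul_add_one (m : ℕ) :
    eHL (2 * m + 1) = eHL m + eHL (m + 1) + m := by
  rw [eHL_two_mul_add_one_eq_add_length, eHL_succ]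
  ring

theorem eHL_zero : eHL 0 = 0 := by
  simp [eHL_eq_sum_eHLTerm]

theorem eHL_add_add_min_le (a b : ℕ) : eHL a + eHL b + min a b ≤ eHL (a + b) := by
  rcases Nat.eq_zero_or_pos a with rfl | ha
  · simp [eHL_zero]
  rcases Nat.eq_zero_or_pos b with rfl | hb
  · simp [eHL_zero]
  have ih := fun x y (_ : x + y < a + b) => eHL_add_add_min_le x y
  obtain ⟨x, rfl | rfl⟩ := Nat.even_or_odd' a <;> obtain ⟨y, rfl | rfl⟩ := Nat.even_or_odd' b
  · have hxy : eHL x + eHL y + min x y ≤ eHL (x + y) := ih x y (by omega)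
    rw [show 2 * x + 2 * y = 2 * (x + y) by ring, eHL_two_mul, eHL_two_mul, eHL_two_mul]
    omega
  · have hxy : eHL x + eHL y + min x y ≤ eHL (x + y) := ih x y (by omega)
    have hxy' : eHL x + eHL (y + 1) + min x (y + 1) ≤ eHL (x + y + 1) := ih x (y + 1) (by omega)
    rw [show 2 * x + (2 * y + 1) = 2 * (x + y) + 1 by ring, eHL_two_mul, eHL_two_mul_add_one,
      eHL_two_mul_add_one]
    omega
  · have hxy : eHL x + eHL y + min x y ≤ eHL (x + y) := ih x y (by omega)
    have hx'y : eHL (x + 1) + eHL y + min (x + 1) y ≤ eHL (x + y + 1) := by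
      simpa only [add_right_comm] using ih (x + 1) y (by omega)
    rw [show 2 * x + 1 + 2 * y = 2 * (x + y) + 1 by ring, eHL_two_mul, eHL_two_mul_add_one,
      eHL_two_mul_add_one]
    omega
  · have hxy' : eHL x + eHL (y + 1) + min x (y + 1) ≤ eHL (x + y + 1) := ih x (y + 1) (by omega)
    have hx'y : eHL (x + 1) + eHL y + min (x + 1) y ≤ eHL (x + y + 1) := by
      simpa only [add_right_comm] using ih (x + 1) y (by omega)
    rw [show 2 * x + 1 + (2 * y + 1) = 2 * (x + y + 1) by ring, eHL_two_mul,
      eHL_two_mul_add_one, eHL_two_mul_add_one]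
    omega
termination_by a + b

theorem eHL_superadditive_general (g₀ g₁ : ℕ) (h : g₀ ≤ g₁) :
    eHL g₀ + eHL g₁ + g₀ ≤ eHL (g₀ + g₁) := by
  simpa [min_eq_left h] using eHL_add_add_min_le g₀ g₁

theorem eHL_superadditive (g₀ g₁ : ℕ) (h₀ : 1 ≤ g₀) (h : g₀ ≤ g₁) :
    eHL g₀ + eHL g₁ + g₀ ≤ eHL (g₀ + g₁) :=
  eHL_superadditive_general g₀ g₁ h
end

section
/- Let e(g) = Σ_{i=0}^{s} t_i·2^{t_i−1} + Σ_{i=0}^{s} i·2^{t_i} where g = Σ_{i=0}^{s} 2^{t_i} is the binary expansion (t_0 > ... > t_s ≥ 0). If g ≤ 2^{n−2}, then (n−2)·g − 2·e(g) ≥ 0. -/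
open Finset in
theorem sort_filter_testBit_eq_bitIndices (g : ℕ) :
    ((range (g + 1)).filter (fun k => g.testBit k)).sort (· ≤ ·) = g.bitIndices :=
  (sortedLT_sort _).eq_of_mem_iff Nat.bitIndices_sorted fun k => by
    simp only [mem_sort, mem_filter, mem_range, Nat.mem_bitIndices, and_iff_right_iff_imp]
    exact fun h => Nat.lt_succ_of_le (Nat.lt_two_pow_self.le.trans (Nat.ge_two_pow_of_testBit h))

theorem sum_map_two_pow_expList (g : ℕ) : ((expList g).map (2 ^ ·)).sum = g := by
  rw [expList_eq_reverse_bitIndices, List.map_reverse, List.sum_reverse,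
    Nat.sum_map_two_pow_bitIndices]

theorem bitIndices_two_pow_add {t r : ℕ} (hr : r < 2 ^ t) :
    (2 ^ t + r).bitIndices = r.bitIndices ++ [t] := by
  have hsorted : (r.bitIndices ++ [t]).SortedLT := by
    refine List.Pairwise.sortedLT (List.pairwise_append.2
      ⟨Nat.bitIndices_sorted.pairwise, List.pairwise_singleton _ _, ?_⟩)
    intro a ha b hb
    rw [List.mem_singleton.1 hb]
    exact (Nat.pow_lt_pow_iff_right (by norm_num)).1
      ((Nat.two_pow_le_of_mem_bitIndices ha).trans_lt hr)
  simpa [add_comm] using Nat.bitIndices_sum_map_two_pow hsorted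

theorem expList_two_pow_add {t r : ℕ} (hr : r < 2 ^ t) :
    expList (2 ^ t + r) = t :: expList r := by
  simp [expList_eq_reverse_bitIndices, bitIndices_two_pow_add hr]

theorem sum_map_zipIdx_succ (L : List ℕ) (i : ℕ) :
    ((L.zipIdx (i + 1)).map (fun p => p.1 * 2 ^ (p.1 - 1) + p.2 * 2 ^ p.1)).sum
      = ((L.zipIdx i).map (fun p => p.1 * 2 ^ (p.1 - 1) + p.2 * 2 ^ p.1)).sum
        + (L.map (2 ^ ·)).sum := by
  induction L generalizing i with
  | nil => rfl
  | cons a L ih =>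
    simp only [List.zipIdx_cons, List.map_cons, List.sum_cons, ih]
    ring

theorem eHL_two_pow_add {t r : ℕ} (hr : r < 2 ^ t) :
    eHL (2 ^ t + r) = t * 2 ^ (t - 1) + r + eHL r := by
  rw [eHL, eHL, expList_two_pow_add hr, List.zipIdx_cons, List.map_cons, List.sum_cons,
    sum_map_zipIdx_succ, sum_map_two_pow_expList]
  ring

theorem two_mul_eHL_two_pow_add {t r : ℕ} (hr : r < 2 ^ t) :
    2 * eHL (2 ^ t + r) = t * 2 ^ t + 2 * r + 2 * eHL r := by
  rw [eHL_two_pow_add hr]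
  cases t with
  | zero => ring
  | succ t => rw [Nat.add_sub_cancel, pow_succ]; ring

theorem two_mul_eHL_le {m g : ℕ} (h : g ≤ 2 ^ m) : 2 * eHL g ≤ m * g := by
  induction g using Nat.strong_induction_on generalizing m with
  | _ g ih =>
  rcases Nat.eq_zero_or_pos g with rfl | hg
  · simp [eHL_zero]
  have hlow := Nat.pow_log_le_self 2 hg.ne'
  have hhigh := Nat.lt_pow_succ_log_self (b := 2) (by norm_num) g
  generalize Nat.log 2 g = t at hlow hhigh
  obtain ⟨r, rfl⟩ := Nat.exists_eq_add_of_le hlow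
  have hr : r < 2 ^ t := by rw [pow_succ] at hhigh; omega
  have htm : t ≤ m := (Nat.pow_le_pow_iff_right (by norm_num)).1 (hlow.trans h)
  rw [two_mul_eHL_two_pow_add hr]
  rcases htm.lt_or_eq with htm | rfl
  · have ihr : 2 * eHL r ≤ t * r := ih r (by omega) hr.le
    calc t * 2 ^ t + 2 * r + 2 * eHL r ≤ t * 2 ^ t + 2 * r + t * r := by omega
      _ ≤ (t + 1) * (2 ^ t + r) := by nlinarith
      _ ≤ m * (2 ^ t + r) := by gcongr; omega
  · obtain rfl : r = 0 := by omega
    simp [eHL_zero]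

theorem eHL_le_regular_bound (n g : ℕ) (h : g ≤ 2 ^ (n - 2)) :
    2 * eHL g ≤ (n - 2) * g :=
  two_mul_eHL_le h
end

section
/- For any n-dimensional hypercube-like graph G_n ∈ HL_n and any vertex subset X with |X| = g = Σ_{i=0}^{s} 2^{t_i} (binary expansion), the number of edges of the induced subgraph G_n[X] is at most Σ_{i=0}^{s} t_i·2^{t_i−1} + Σ_{i=0}^{s} i·2^{t_i}, and this bound is attained by some X. -/
/-- Vertex type of `n`-dimensional HL-networks: `2^n` vertices. -/
def HLV : ℕ → Type
  | 0 => Unit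
  | n + 1 => Bool × HLV n

instance HLV.fintype : ∀ n, Fintype (HLV n)
  | 0 => inferInstanceAs (Fintype Unit)
  | n + 1 => letI := HLV.fintype n; inferInstanceAs (Fintype (Bool × HLV n))

/-- Join two graphs on the same vertex type by a perfect matching given by a
bijection `f`: the result lives on `Bool × V`, with the copy `false` carrying `G`,
the copy `true` carrying `G'`, and matching edges between `(false, v)` and `(true, f v)`. -/
def matchingJoin {V : Type} (G G' : SimpleGraph V) (f : V ≃ V) :
    SimpleGraph (Bool × V) where
  Adj x y :=
    (x.1 = false ∧ y.1 = false ∧ G.Adj x.2 y.2) ∨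
    (x.1 = true ∧ y.1 = true ∧ G'.Adj x.2 y.2) ∨
    (x.1 = false ∧ y.1 = true ∧ y.2 = f x.2) ∨
    (x.1 = true ∧ y.1 = false ∧ x.2 = f y.2)
  symm := by
    refine ⟨?_⟩
    rintro ⟨a, u⟩ ⟨b, v⟩ h
    dsimp at h ⊢
    rcases h with ⟨h1, h2, h3⟩ | ⟨h1, h2, h3⟩ | ⟨h1, h2, h3⟩ | ⟨h1, h2, h3⟩
    · exact Or.inl ⟨h2, h1, h3.symm⟩
    · exact Or.inr (Or.inl ⟨h2, h1, h3.symm⟩)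
    · exact Or.inr (Or.inr (Or.inr ⟨h2, h1, h3⟩))
    · exact Or.inr (Or.inr (Or.inl ⟨h2, h1, h3⟩))
  loopless := by
    refine ⟨?_⟩
    rintro ⟨a, u⟩ h
    dsimp at h
    rcases h with ⟨_, _, h3⟩ | ⟨_, _, h3⟩ | ⟨h1, h2, _⟩ | ⟨h1, h2, _⟩
    · exact G.irrefl h3
    · exact G'.irrefl h3
    · simp_all
    · simp_all

/-- The class of `n`-dimensional hypercube-like networks (HL-networks):
`HL 1 = {K₂}`, and the members of `HL (n+1)` are exactly the graphs obtained by
joining two members of `HL n` by a perfect matching. -/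
inductive IsHL : (n : ℕ) → SimpleGraph (HLV n) → Prop
  | base : IsHL 1 ⊤
  | step {n : ℕ} {G G' : SimpleGraph (HLV n)} (f : HLV n ≃ HLV n) :
      IsHL n G → IsHL n G' → IsHL (n + 1) (matchingJoin G G' f)

/-!
Let `S g = ∑_{i<g} popcount i`, the number of edges induced by the first `g` vertices of the
hypercube in binary order. Splitting `g = 2^t + r` with `r < 2^t` gives
`S g = t·2^(t-1) + r + S r`, which is the recursion satisfied by `eHL`, so `eHL = S`.

In a matching join, a vertex set `X` meets the two halves in sets of sizes `a` and `b`, and the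
matching contributes at most `min a b` edges, so the upper bound follows by induction from the
superadditivity `S a + S b + min a b ≤ S (a + b)`. For the lower bound, fill the first half
before the second: the matching then contributes exactly `b` edges, and `S (2^n + b)` splits in
the same way. The induction starts in dimension `0`, since `K₂` is the matching join of two
one-vertex graphs.
-/

def bitCountSum (n : ℕ) : ℕ := ∑ i ∈ Finset.range n, i.bitIndices.length

theorem bitCountSum_zero : bitCountSum 0 = 0 := rfl

theorem bitCountSum_succ (n : ℕ) :
    bitCountSum (n + 1) = bitCountSum n + n.bitIndices.length :=
  Finset.sum_range_succ _ _

theorem bitCountSum_two_mul (x : ℕ) : bitCountSum (2 * x) = 2 * bitCountSum x + x := by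
  induction x with
  | zero => rfl
  | succ x ih =>
    rw [show 2 * (x + 1) = 2 * x + 1 + 1 by ring, bitCountSum_succ, bitCountSum_succ, ih,
      bitCountSum_succ]
    simp only [Nat.bitIndices_two_mul, Nat.bitIndices_two_mul_add_one, List.length_map,
      List.length_cons]
    ring

theorem bitCountSum_two_mul_add_one (x : ℕ) :
    bitCountSum (2 * x + 1) = 2 * bitCountSum x + x + x.bitIndices.length := by
  simp [bitCountSum_succ, bitCountSum_two_mul]

theorem bitCountSum_add_add_min_le (a b : ℕ) :
    bitCountSum a + bitCountSum b + min a b ≤ bitCountSum (a + b) := by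
  rcases Nat.eq_zero_or_pos a with rfl | ha
  · simp [bitCountSum_zero]
  rcases Nat.eq_zero_or_pos b with rfl | hb
  · simp [bitCountSum_zero]
  -- Halve both arguments; a popcount term from an odd argument is matched by the instance in
  -- which that half is rounded up.
  obtain ⟨x, rfl | rfl⟩ := Nat.even_or_odd' a <;>
    obtain ⟨y, rfl | rfl⟩ := Nat.even_or_odd' b
  · have := bitCountSum_add_add_min_le x y
    rw [← mul_add, bitCountSum_two_mul, bitCountSum_two_mul, bitCountSum_two_mul]
    omega
  · have h₁ := bitCountSum_add_add_min_le x y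
    have h₂ := bitCountSum_add_add_min_le x (y + 1)
    rw [← add_assoc, bitCountSum_succ y, bitCountSum_succ (x + y)] at h₂
    rw [show 2 * x + (2 * y + 1) = 2 * (x + y) + 1 by ring, bitCountSum_two_mul,
      bitCountSum_two_mul_add_one, bitCountSum_two_mul_add_one]
    omega
  · have h₁ := bitCountSum_add_add_min_le x y
    have h₂ := bitCountSum_add_add_min_le (x + 1) y
    rw [Nat.add_right_comm x 1 y, bitCountSum_succ x, bitCountSum_succ (x + y)] at h₂
    rw [show 2 * x + 1 + 2 * y = 2 * (x + y) + 1 by ring, bitCountSum_two_mul,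
      bitCountSum_two_mul_add_one, bitCountSum_two_mul_add_one]
    omega
  · have h₁ := bitCountSum_add_add_min_le x (y + 1)
    have h₂ := bitCountSum_add_add_min_le (x + 1) y
    rw [← add_assoc, bitCountSum_succ y] at h₁
    rw [Nat.add_right_comm x 1 y, bitCountSum_succ x] at h₂
    rw [show 2 * x + 1 + (2 * y + 1) = 2 * (x + y + 1) by ring, bitCountSum_two_mul,
      bitCountSum_two_mul_add_one, bitCountSum_two_mul_add_one]
    omega
termination_by a + b

theorem bitCountSum_two_pow_add {t r : ℕ} (hr : r ≤ 2 ^ t) :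
    bitCountSum (2 ^ t + r) = bitCountSum (2 ^ t) + r + bitCountSum r := by
  induction r with
  | zero => simp [bitCountSum_zero]
  | succ r ih =>
    rw [← add_assoc, bitCountSum_succ, ih (by omega), bitIndices_two_pow_add (by omega),
      bitCountSum_succ, List.length_append, List.length_singleton]
    ring

theorem bitCountSum_two_pow (t : ℕ) : bitCountSum (2 ^ t) = t * 2 ^ (t - 1) := by
  induction t with
  | zero => rfl
  | succ t ih =>
    rw [pow_succ, mul_two, bitCountSum_two_pow_add le_rfl, ih]
    cases t with
    | zero => rfl
    | succ t => simp only [add_tsub_cancel_right, pow_succ]; ring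

theorem eHL_eq_bitCountSum (g : ℕ) : eHL g = bitCountSum g := by
  induction g using Nat.strong_induction_on with
  | _ g ih =>
    rcases eq_or_ne g 0 with rfl | hg
    · simp [eHL, expList_eq_reverse_bitIndices, bitCountSum_zero]
    have hlo : 2 ^ Nat.log 2 g ≤ g := Nat.pow_log_le_self 2 hg
    have hhi : g < 2 ^ (Nat.log 2 g + 1) := Nat.lt_pow_succ_log_self one_lt_two g
    generalize Nat.log 2 g = t at hlo hhi
    obtain ⟨r, rfl⟩ := Nat.exists_eq_add_of_le hlo
    have hr : r < 2 ^ t := by rw [pow_succ] at hhi; omega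
    rw [eHL_two_pow_add hr, bitCountSum_two_pow_add hr.le, bitCountSum_two_pow,
      ih r (lt_add_of_pos_left r (Nat.two_pow_pos t))]

namespace SimpleGraph

variable {V : Type*}

theorem ncard_edgeSet_induce (G : SimpleGraph V) (s : Set V) :
    (G.induce s).edgeSet.ncard = (G.edgeSet ∩ s.sym2).ncard := by
  rw [← Set.ncard_image_of_injective _ (Sym2.map.injective Subtype.val_injective)]
  congr 1
  ext e
  induction e using Sym2.ind
  simp only [Set.mem_image, Sym2.exists, Set.mem_inter_iff, Set.mk_mem_sym2_iff, mem_edgeSet]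
  aesop (add simp adj_comm)

end SimpleGraph

theorem Set.ncard_bool_prod_eq_add {V : Type} [Finite V] (X : Set (Bool × V)) :
    X.ncard = (Prod.mk false ⁻¹' X).ncard + (Prod.mk true ⁻¹' X).ncard := by
  have hX :
      X = Prod.mk false '' (Prod.mk false ⁻¹' X) ∪ Prod.mk true '' (Prod.mk true ⁻¹' X) := by
    ext ⟨b, v⟩
    cases b <;> simp
  have hdisj : Disjoint (Prod.mk false '' (Prod.mk false ⁻¹' X))
      (Prod.mk true '' (Prod.mk true ⁻¹' X)) := by
    simp [Set.disjoint_left]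
  conv_lhs => rw [hX]
  rw [Set.ncard_union_eq hdisj, Set.ncard_image_of_injective _ (Prod.mk_right_injective false),
    Set.ncard_image_of_injective _ (Prod.mk_right_injective true)]

theorem edgeSet_matchingJoin {V : Type} (G G' : SimpleGraph V) (f : V ≃ V) :
    (matchingJoin G G' f).edgeSet =
      Sym2.map (Prod.mk false) '' G.edgeSet ∪ Sym2.map (Prod.mk true) '' G'.edgeSet ∪
        Set.range (fun v => s((false, v), (true, f v))) := by
  ext e
  induction e using Sym2.ind with
  | _ p q =>
    obtain ⟨a, u⟩ := p
    obtain ⟨b, v⟩ := q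
    cases a <;> cases b <;>
      simp only [SimpleGraph.mem_edgeSet, matchingJoin, Set.mem_union, Set.mem_image,
        Set.mem_range, Sym2.exists, Sym2.map_mk] <;>
      aesop (add simp SimpleGraph.adj_comm)

def HasInducedEdgeBound {V : Type} (G : SimpleGraph V) : Prop :=
  ∀ X : Set V, (G.induce X).edgeSet.ncard ≤ bitCountSum X.ncard

def AttainsInducedEdgeBound {V : Type} (G : SimpleGraph V) : Prop :=
  ∀ g ≤ Nat.card V, ∃ X : Set V, X.ncard = g ∧ (G.induce X).edgeSet.ncard = bitCountSum g

section matchingJoin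

variable {V : Type} [Finite V]

theorem ncard_edgeSet_induce_matchingJoin (G G' : SimpleGraph V) (f : V ≃ V)
    (X : Set (Bool × V)) :
    ((matchingJoin G G' f).induce X).edgeSet.ncard =
      (G.induce (Prod.mk false ⁻¹' X)).edgeSet.ncard +
        (G'.induce (Prod.mk true ⁻¹' X)).edgeSet.ncard +
          {v | (false, v) ∈ X ∧ (true, f v) ∈ X}.ncard := by
  have hmatch : Function.Injective (fun v => s(((false, v) : Bool × V), (true, f v))) := by
    intro u v h
    simpa using h
  have hdisj₁ :
      Disjoint (Sym2.map (Prod.mk false) '' (G.edgeSet ∩ (Prod.mk false ⁻¹' X).sym2))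
        (Sym2.map (Prod.mk true) '' (G'.edgeSet ∩ (Prod.mk true ⁻¹' X).sym2)) := by
    refine Set.disjoint_left.2 ?_
    rintro _ ⟨e, -, rfl⟩ ⟨e', -, h⟩
    induction e using Sym2.ind
    induction e' using Sym2.ind
    simp at h
  have hdisj₂ : Disjoint
      (Sym2.map (Prod.mk false) '' (G.edgeSet ∩ (Prod.mk false ⁻¹' X).sym2) ∪
        Sym2.map (Prod.mk true) '' (G'.edgeSet ∩ (Prod.mk true ⁻¹' X).sym2))
      ((fun v => s(((false, v) : Bool × V), (true, f v))) ''
        ((fun v => s(((false, v) : Bool × V), (true, f v))) ⁻¹' X.sym2)) := by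
    refine Set.disjoint_right.2 ?_
    rintro _ ⟨v, -, rfl⟩ (⟨e, -, h⟩ | ⟨e, -, h⟩) <;>
    · induction e using Sym2.ind
      simp at h
  rw [SimpleGraph.ncard_edgeSet_induce, SimpleGraph.ncard_edgeSet_induce,
    SimpleGraph.ncard_edgeSet_induce, edgeSet_matchingJoin, Set.union_inter_distrib_right,
    Set.union_inter_distrib_right, ← Set.image_inter_preimage, ← Set.image_inter_preimage,
    ← Set.image_preimage_eq_range_inter, ← Set.sym2_preimage, ← Set.sym2_preimage,
    Set.ncard_union_eq hdisj₂, Set.ncard_union_eq hdisj₁,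
    Set.ncard_image_of_injective _ (Sym2.map.injective (Prod.mk_right_injective false)),
    Set.ncard_image_of_injective _ (Sym2.map.injective (Prod.mk_right_injective true)),
    Set.ncard_image_of_injective _ hmatch]
  rfl

theorem HasInducedEdgeBound.matchingJoin {G G' : SimpleGraph V} (hG : HasInducedEdgeBound G)
    (hG' : HasInducedEdgeBound G') (f : V ≃ V) :
    HasInducedEdgeBound (matchingJoin G G' f) := by
  intro X
  set M := {v | (false, v) ∈ X ∧ (true, f v) ∈ X}
  have hM₀ : M.ncard ≤ (Prod.mk false ⁻¹' X).ncard := Set.ncard_le_ncard fun v hv => hv.1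
  have hM₁ : M.ncard ≤ (Prod.mk true ⁻¹' X).ncard := by
    rw [← Set.ncard_image_of_injective M f.injective]
    exact Set.ncard_le_ncard (by rintro _ ⟨v, hv, rfl⟩; exact hv.2)
  calc ((_root_.matchingJoin G G' f).induce X).edgeSet.ncard
      = (G.induce (Prod.mk false ⁻¹' X)).edgeSet.ncard +
          (G'.induce (Prod.mk true ⁻¹' X)).edgeSet.ncard + M.ncard :=
        ncard_edgeSet_induce_matchingJoin G G' f X
    _ ≤ bitCountSum (Prod.mk false ⁻¹' X).ncard + bitCountSum (Prod.mk true ⁻¹' X).ncard +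
          min (Prod.mk false ⁻¹' X).ncard (Prod.mk true ⁻¹' X).ncard := by
        gcongr
        · exact hG _
        · exact hG' _
        · exact le_min hM₀ hM₁
    _ ≤ bitCountSum X.ncard := by
        rw [Set.ncard_bool_prod_eq_add X]
        exact bitCountSum_add_add_min_le _ _

theorem AttainsInducedEdgeBound.matchingJoin {G G' : SimpleGraph V} {n : ℕ}
    (hV : Nat.card V = 2 ^ n) (hG : AttainsInducedEdgeBound G)
    (hG' : AttainsInducedEdgeBound G') (f : V ≃ V) :
    AttainsInducedEdgeBound (matchingJoin G G' f) := by
  have hjoin : ∀ A B : Set V, ∃ X : Set (Bool × V), X.ncard = A.ncard + B.ncard ∧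
      ((_root_.matchingJoin G G' f).induce X).edgeSet.ncard =
        (G.induce A).edgeSet.ncard + (G'.induce B).edgeSet.ncard +
          {v | v ∈ A ∧ f v ∈ B}.ncard := fun A B =>
    ⟨{p | p.2 ∈ cond p.1 B A}, Set.ncard_bool_prod_eq_add _,
      ncard_edgeSet_induce_matchingJoin G G' f _⟩
  intro g hg
  rw [Nat.card_prod, Nat.card_eq_fintype_card (α := Bool), Fintype.card_bool, hV] at hg
  rcases le_or_gt g (2 ^ n) with hle | hgt
  · obtain ⟨A, hA, hAe⟩ := hG g (hV ▸ hle)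
    obtain ⟨X, hX, hXe⟩ := hjoin A ∅
    refine ⟨X, by simp [hX, hA], ?_⟩
    simp [hXe, hAe, SimpleGraph.ncard_edgeSet_induce]
  · obtain ⟨A, hA, hAe⟩ := hG (2 ^ n) hV.ge
    have hAuniv : A = Set.univ := (Set.eq_univ_iff_ncard A).2 (hA.trans hV.symm)
    obtain ⟨B, hB, hBe⟩ := hG' (g - 2 ^ n) (by omega)
    obtain ⟨X, hX, hXe⟩ := hjoin A B
    have hM : {v | v ∈ A ∧ f v ∈ B}.ncard = g - 2 ^ n := by
      rw [hAuniv, ← hB, ← Set.ncard_preimage_of_injective_subset_range (s := B) f.injective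
        (by simp)]
      simp [Set.preimage]
    refine ⟨X, by omega, ?_⟩
    have hsplit := bitCountSum_two_pow_add (t := n) (r := g - 2 ^ n) (by omega)
    rw [Nat.add_sub_cancel' hgt.le] at hsplit
    rw [hXe, hAe, hBe, hM, hsplit]
    ring

end matchingJoin

theorem hasInducedEdgeBound_bot (V : Type) : HasInducedEdgeBound (⊥ : SimpleGraph V) := by
  intro X
  simp

theorem attainsInducedEdgeBound_bot_unit : AttainsInducedEdgeBound (⊥ : SimpleGraph Unit) := by
  intro g hg
  rw [Nat.card_unique] at hg
  interval_cases g
  · exact ⟨∅, by simp, by simp [bitCountSum_zero]⟩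
  · exact ⟨Set.univ, by simp, by simp [bitCountSum_succ, bitCountSum_zero]⟩

theorem card_HLV : ∀ n, Nat.card (HLV n) = 2 ^ n
  | 0 => show Nat.card Unit = 1 from Nat.card_unique
  | n + 1 => by
    rw [show HLV (n + 1) = (Bool × HLV n) from rfl, Nat.card_prod, card_HLV n,
      Nat.card_eq_fintype_card (α := Bool), Fintype.card_bool, pow_succ, mul_comm]

theorem top_eq_matchingJoin_bot :
    (⊤ : SimpleGraph (HLV 1)) = matchingJoin ⊥ ⊥ (Equiv.refl (HLV 0)) := by
  show (⊤ : SimpleGraph (Bool × Unit)) = _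
  ext ⟨a, ⟨⟩⟩ ⟨b, ⟨⟩⟩
  cases a <;> cases b <;> simp [matchingJoin] <;> rfl

theorem IsHL.hasInducedEdgeBound_and_attains {n : ℕ} {G : SimpleGraph (HLV n)} (hG : IsHL n G) :
    HasInducedEdgeBound G ∧ AttainsInducedEdgeBound G := by
  induction hG with
  | base =>
    rw [top_eq_matchingJoin_bot]
    exact ⟨(hasInducedEdgeBound_bot _).matchingJoin (hasInducedEdgeBound_bot _) _,
      attainsInducedEdgeBound_bot_unit.matchingJoin (card_HLV 0)
        attainsInducedEdgeBound_bot_unit _⟩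
  | step f _ _ ih ih' =>
    exact ⟨ih.1.matchingJoin ih'.1 f, ih.2.matchingJoin (card_HLV _) ih'.2 f⟩

/-- In any `n`-dimensional HL-network, any set of `g` vertices induces at most
`e g` edges, and (whenever `g ≤ 2^n`) some set of `g` vertices attains this bound. -/
theorem isHL_induced_max_edges (n g : ℕ) (G : SimpleGraph (HLV n)) (hG : IsHL n G) :
    (∀ X : Set (HLV n), X.ncard = g → (G.induce X).edgeSet.ncard ≤ eHL g) ∧
    (g ≤ 2 ^ n → ∃ X : Set (HLV n), X.ncard = g ∧ (G.induce X).edgeSet.ncard = eHL g) := by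
  obtain ⟨hbound, hattain⟩ := hG.hasInducedEdgeBound_and_attains
  rw [eHL_eq_bitCountSum]
  refine ⟨fun X hX => hX ▸ hbound X, fun hg => hattain g ?_⟩
  rwa [card_HLV]
end
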